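/- The transport cost ∫‖x−y‖ dπ' equals 1/2, where π' is the martingale coupling between μ_3 and μ_3 P_0 defined by π' = (1/6)(δ_{((1,0),(1,0))} + 2δ_{((2,0),(2,0))} + δ_{((3,0),(3,0))}) + (1/24)(3δ_{((1,0),(0,0))} + δ_{((1,0),(4,0))} + δ_{((3,0),(0,0))} + 3δ_{((3,0),(4,0))}). In particular V^M_{c₁}(μ_3, μ_3 P_0) ≤ 1/2, where c₁(x,y) = ‖x−y‖. -/

import Mathlib

open MeasureTheory Filter
open scoped BoundedContinuousFunction ENNReal Topology

noncomputable section

/-- The plane with the Euclidean norm. -/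
abbrev R2 : Type := EuclideanSpace ℝ (Fin 2)

/-- The point `(a, b)` of the Euclidean plane. -/
def pt (a b : ℝ) : R2 := (WithLp.equiv 2 (Fin 2 → ℝ)).symm ![a, b]

/-- The unit vector at angle `θ`. -/
def dir (θ : ℝ) : R2 := pt (Real.cos θ) (Real.sin θ)

/-- The one-step kernel `P_θ` of the simple random walk along the line of angle `θ`. -/
def Pker (θ : ℝ) (x : R2) : Measure R2 :=
  (2 : ℝ≥0∞)⁻¹ • (Measure.dirac (x + dir θ) + Measure.dirac (x - dir θ))

/-- The measure `μ_m = (1/m) ∑_{i=1}^m δ_{(i,0)}`. -/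
def muM (m : ℕ) : Measure R2 :=
  (m : ℝ≥0∞)⁻¹ • ∑ i ∈ Finset.Icc 1 m, Measure.dirac (pt i 0)

/-- The coupling `μ(Id, P)` of `μ` with conditional law `P(x,·)` given `x`. -/
def couple (μ : Measure R2) (P : R2 → Measure R2) : Measure (R2 × R2) :=
  μ.bind (fun x => (P x).map (fun y => (x, y)))

/-- `π` is a coupling of `μ` and `ν`. -/
def IsCoupling {E F : Type*} [MeasurableSpace E] [MeasurableSpace F]
    (μ : Measure E) (ν : Measure F) (π : Measure (E × F)) : Prop :=
  IsProbabilityMeasure π ∧ π.map Prod.fst = μ ∧ π.map Prod.snd = ν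

/-- `π` is a martingale coupling of `μ` and `ν`: a coupling such that
`∫ φ(x)(y - x) dπ(x,y) = 0` for every bounded continuous `φ`. -/
def IsMartCoupling {E : Type*} [MeasurableSpace E] [NormedAddCommGroup E] [NormedSpace ℝ E]
    (μ ν : Measure E) (π : Measure (E × E)) : Prop :=
  IsCoupling μ ν π ∧ ∀ φ : E →ᵇ ℝ, ∫ p, φ p.1 • (p.2 - p.1) ∂π = 0

/-- The 1-Wasserstein distance: infimum of `∫ ‖x - y‖ dπ` over couplings. -/
def W1 {E : Type*} [MeasurableSpace E] [NormedAddCommGroup E] (μ ν : Measure E) : ℝ :=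
  sInf {r | ∃ π : Measure (E × E), IsCoupling μ ν π ∧ ∫ p, ‖p.1 - p.2‖ ∂π = r}

/-- The value `V^M_c(μ,ν)` of the martingale optimal transport problem. -/
def MOTval {E : Type*} [MeasurableSpace E] [NormedAddCommGroup E] [NormedSpace ℝ E]
    (c : E → E → ℝ) (μ ν : Measure E) : ℝ :=
  sInf {r | ∃ π : Measure (E × E), IsMartCoupling μ ν π ∧ ∫ p, c p.1 p.2 ∂π = r}

/-- Convex order: `∫ φ dμ ≤ ∫ φ dν` for every integrable convex `φ`. -/
def ConvexOrder {E : Type*} [MeasurableSpace E] [NormedAddCommGroup E] [NormedSpace ℝ E]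
    (μ ν : Measure E) : Prop :=
  ∀ φ : E → ℝ, ConvexOn ℝ Set.univ φ → Integrable φ ν → Integrable φ μ →
    ∫ x, φ x ∂μ ≤ ∫ x, φ x ∂ν

/-- The explicit martingale coupling `π'` between `μ_3` and `μ_3 P_0`. -/
def piPrime : Measure (R2 × R2) :=
  (6 : ℝ≥0∞)⁻¹ • (Measure.dirac (pt 1 0, pt 1 0) + 2 • Measure.dirac (pt 2 0, pt 2 0)
      + Measure.dirac (pt 3 0, pt 3 0))
  + (24 : ℝ≥0∞)⁻¹ • (3 • Measure.dirac (pt 1 0, pt 0 0) + Measure.dirac (pt 1 0, pt 4 0)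
      + Measure.dirac (pt 3 0, pt 0 0) + 3 • Measure.dirac (pt 3 0, pt 4 0))

/-! ### Auxiliary lemmas -/

lemma pt_add (a b c d : ℝ) : pt a b + pt c d = pt (a+c) (b+d) := by
  ext i; fin_cases i <;> simp [pt]

lemma pt_sub (a b c d : ℝ) : pt a b - pt c d = pt (a-c) (b-d) := by
  ext i; fin_cases i <;> simp [pt]

lemma norm_pt (a : ℝ) : ‖pt a 0‖ = |a| := by
  simp [pt, EuclideanSpace.norm_eq, Fin.sum_univ_two, Real.sqrt_sq_eq_abs]

lemma pt_zero : pt 0 0 = 0 := by ext i; fin_cases i <;> simp [pt]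

lemma dir_zero : dir 0 = pt 1 0 := by simp [dir]

lemma muM3_eq : muM 3 = (3:ℝ≥0∞)⁻¹ • (Measure.dirac (pt 1 0) + Measure.dirac (pt 2 0)
    + Measure.dirac (pt 3 0)) := by
  rw [muM, show Finset.Icc 1 3 = {1,2,3} from rfl]
  norm_num [Finset.sum_insert]
  exact (add_assoc _ _ _).symm

lemma measurable_Pker : Measurable (Pker 0) := by
  apply Measure.measurable_of_measurable_coe
  intro s hs
  simp only [Pker, Measure.smul_apply, Measure.add_apply, Measure.dirac_apply, smul_eq_mul]
  measurability

lemma piPrime_expand : piPrime =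
    (6 : ℝ≥0∞)⁻¹ • Measure.dirac ((pt 1 0, pt 1 0) : R2 × R2)
  + (6 : ℝ≥0∞)⁻¹ • Measure.dirac ((pt 2 0, pt 2 0) : R2 × R2)
  + (6 : ℝ≥0∞)⁻¹ • Measure.dirac ((pt 2 0, pt 2 0) : R2 × R2)
  + (6 : ℝ≥0∞)⁻¹ • Measure.dirac ((pt 3 0, pt 3 0) : R2 × R2)
  + (24 : ℝ≥0∞)⁻¹ • Measure.dirac ((pt 1 0, pt 0 0) : R2 × R2)
  + (24 : ℝ≥0∞)⁻¹ • Measure.dirac ((pt 1 0, pt 0 0) : R2 × R2)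
  + (24 : ℝ≥0∞)⁻¹ • Measure.dirac ((pt 1 0, pt 0 0) : R2 × R2)
  + (24 : ℝ≥0∞)⁻¹ • Measure.dirac ((pt 1 0, pt 4 0) : R2 × R2)
  + (24 : ℝ≥0∞)⁻¹ • Measure.dirac ((pt 3 0, pt 0 0) : R2 × R2)
  + (24 : ℝ≥0∞)⁻¹ • Measure.dirac ((pt 3 0, pt 4 0) : R2 × R2)
  + (24 : ℝ≥0∞)⁻¹ • Measure.dirac ((pt 3 0, pt 4 0) : R2 × R2)
  + (24 : ℝ≥0∞)⁻¹ • Measure.dirac ((pt 3 0, pt 4 0) : R2 × R2) := by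
  rw [piPrime, show ∀ m : Measure (R2 × R2), 2 • m = m + m from fun m => two_smul ℕ m,
    show ∀ m : Measure (R2 × R2), 3 • m = m + m + m from fun m => by
      rw [show (3:ℕ) = 2 + 1 from rfl, add_nsmul, two_smul, one_nsmul]]
  simp only [smul_add]
  abel_nf
  simp only [smul_comm ((24:ℝ≥0∞))⁻¹ (3:ℕ)]

lemma ennreal_split (a b c : ℝ≥0∞) (ha : a ≠ ⊤) (hb : b ≠ ⊤) (hc : c ≠ ⊤)
    (h : a.toReal = b.toReal + c.toReal) : a = b + c := by
  rw [← ENNReal.toReal_eq_toReal_iff' ha (by finiteness), ENNReal.toReal_add hb hc]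
  exact h

lemma bind_add_left {α β : Type*} [MeasurableSpace α] [MeasurableSpace β]
    (μ ν : Measure α) {f : α → Measure β} (hf : Measurable f) :
    (μ + ν).bind f = μ.bind f + ν.bind f := by
  ext s hs
  simp [Measure.bind_apply hs hf.aemeasurable, lintegral_add_measure]

lemma bind_smul_left {α β : Type*} [MeasurableSpace α] [MeasurableSpace β]
    (c : ℝ≥0∞) (μ : Measure α) {f : α → Measure β} (hf : Measurable f) :
    (c • μ).bind f = c • μ.bind f := by
  ext s hs
  simp [Measure.bind_apply hs hf.aemeasurable, lintegral_smul_measure]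

/-- The weights of the 12 atoms of `piPrime`. -/
def Cw : Fin 12 → ℝ≥0∞ := fun i => if (i : ℕ) < 4 then 6⁻¹ else 24⁻¹

/-- The 12 atoms of `piPrime`. -/
def Pw : Fin 12 → R2 × R2 :=
  ![(pt 1 0, pt 1 0),(pt 2 0, pt 2 0),(pt 2 0, pt 2 0),(pt 3 0, pt 3 0),
    (pt 1 0, pt 0 0),(pt 1 0, pt 0 0),(pt 1 0, pt 0 0),(pt 1 0, pt 4 0),
    (pt 3 0, pt 0 0),(pt 3 0, pt 4 0),(pt 3 0, pt 4 0),(pt 3 0, pt 4 0)]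

lemma Cw_ne_top (i : Fin 12) : Cw i ≠ ⊤ := by
  unfold Cw; split <;> simp

lemma piPrime_sum : piPrime = ∑ i : Fin 12, Cw i • Measure.dirac (Pw i) := by
  rw [piPrime_expand]
  simp only [Fin.sum_univ_succ, Fin.sum_univ_zero, Pw, Matrix.cons_val_zero, Matrix.cons_val_succ]
  norm_num [Cw, Fin.val_succ]
  abel

lemma integrable_dirac_of {X E : Type*} [MeasurableSpace X] [MeasurableSingletonClass X]
    [NormedAddCommGroup E] {f : X → E} (hf : StronglyMeasurable f) (a : X) :
    Integrable f (Measure.dirac a) :=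
  ⟨hf.aestronglyMeasurable, by simp [HasFiniteIntegral, lintegral_dirac]⟩

lemma integral_piPrime {E : Type*} [NormedAddCommGroup E] [NormedSpace ℝ E] [CompleteSpace E]
    {f : R2 × R2 → E} (hf : Continuous f) :
    ∫ q, f q ∂piPrime = ∑ i : Fin 12, (Cw i).toReal • f (Pw i) := by
  rw [piPrime_sum,
    integral_finset_sum_measure (fun i _ =>
      (integrable_dirac_of hf.stronglyMeasurable _).smul_measure (Cw_ne_top i))]
  simp [integral_smul_measure]

lemma coef1 : (3:ℝ≥0∞)⁻¹ = 6⁻¹+24⁻¹+24⁻¹+24⁻¹+24⁻¹ := by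
  rw [← ENNReal.toReal_eq_toReal_iff' (by finiteness) (by finiteness)]
  repeat rw [ENNReal.toReal_add (by finiteness) (by finiteness)]
  norm_num

lemma coef2 : (3:ℝ≥0∞)⁻¹ = 6⁻¹+6⁻¹ := by
  rw [← ENNReal.toReal_eq_toReal_iff' (by finiteness) (by finiteness)]
  repeat rw [ENNReal.toReal_add (by finiteness) (by finiteness)]
  norm_num

lemma coef3 : (6:ℝ≥0∞)⁻¹ = 24⁻¹+24⁻¹+24⁻¹+24⁻¹ := by
  rw [← ENNReal.toReal_eq_toReal_iff' (by finiteness) (by finiteness)]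
  repeat rw [ENNReal.toReal_add (by finiteness) (by finiteness)]
  norm_num

lemma coef4 : (3:ℝ≥0∞)⁻¹ * 2⁻¹ = 6⁻¹ := by
  rw [← ENNReal.toReal_eq_toReal_iff' (by finiteness) (by finiteness)]
  rw [ENNReal.toReal_mul]
  norm_num

lemma map_fst : piPrime.map Prod.fst = muM 3 := by
  rw [piPrime_expand, muM3_eq]
  simp only [show ∀ μ ν : Measure (R2 × R2), (μ+ν).map Prod.fst = μ.map Prod.fst + ν.map Prod.fst
      from fun μ ν => Measure.map_add μ ν measurable_fst,
    Measure.map_smul, Measure.map_dirac' measurable_fst, smul_add]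
  have h1 : (3:ℝ≥0∞)⁻¹ • Measure.dirac (pt 1 0) = (6:ℝ≥0∞)⁻¹ • Measure.dirac (pt 1 0)
      + (24:ℝ≥0∞)⁻¹ • Measure.dirac (pt 1 0) + (24:ℝ≥0∞)⁻¹ • Measure.dirac (pt 1 0)
      + (24:ℝ≥0∞)⁻¹ • Measure.dirac (pt 1 0) + (24:ℝ≥0∞)⁻¹ • Measure.dirac (pt 1 0) := by
    rw [coef1]; simp only [add_smul]
  have h2 : (3:ℝ≥0∞)⁻¹ • Measure.dirac (pt 2 0) = (6:ℝ≥0∞)⁻¹ • Measure.dirac (pt 2 0)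
      + (6:ℝ≥0∞)⁻¹ • Measure.dirac (pt 2 0) := by
    rw [coef2]; simp only [add_smul]
  have h3 : (3:ℝ≥0∞)⁻¹ • Measure.dirac (pt 3 0) = (6:ℝ≥0∞)⁻¹ • Measure.dirac (pt 3 0)
      + (24:ℝ≥0∞)⁻¹ • Measure.dirac (pt 3 0) + (24:ℝ≥0∞)⁻¹ • Measure.dirac (pt 3 0)
      + (24:ℝ≥0∞)⁻¹ • Measure.dirac (pt 3 0) + (24:ℝ≥0∞)⁻¹ • Measure.dirac (pt 3 0) := by
    rw [coef1]; simp only [add_smul]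
  rw [h1, h2, h3]
  abel

lemma bind_muM3 : (muM 3).bind (Pker 0) =
    (6:ℝ≥0∞)⁻¹ • Measure.dirac (pt 0 0) + (6:ℝ≥0∞)⁻¹ • Measure.dirac (pt 1 0)
    + (6:ℝ≥0∞)⁻¹ • Measure.dirac (pt 2 0) + (6:ℝ≥0∞)⁻¹ • Measure.dirac (pt 2 0)
    + (6:ℝ≥0∞)⁻¹ • Measure.dirac (pt 3 0) + (6:ℝ≥0∞)⁻¹ • Measure.dirac (pt 4 0) := by
  rw [muM3_eq, bind_smul_left _ _ measurable_Pker, bind_add_left _ _ measurable_Pker,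
    bind_add_left _ _ measurable_Pker, Measure.dirac_bind measurable_Pker,
    Measure.dirac_bind measurable_Pker, Measure.dirac_bind measurable_Pker]
  simp only [Pker, dir_zero, pt_add, pt_sub]
  norm_num
  simp only [smul_add, smul_smul, coef4]
  abel

lemma map_snd : piPrime.map Prod.snd = (muM 3).bind (Pker 0) := by
  rw [bind_muM3, piPrime_expand]
  simp only [show ∀ μ ν : Measure (R2 × R2), (μ+ν).map Prod.snd = μ.map Prod.snd + ν.map Prod.snd
      from fun μ ν => Measure.map_add μ ν measurable_snd,
    Measure.map_smul, Measure.map_dirac' measurable_snd]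
  have h0 : (6:ℝ≥0∞)⁻¹ • Measure.dirac (pt 0 0) = (24:ℝ≥0∞)⁻¹ • Measure.dirac (pt 0 0)
      + (24:ℝ≥0∞)⁻¹ • Measure.dirac (pt 0 0) + (24:ℝ≥0∞)⁻¹ • Measure.dirac (pt 0 0)
      + (24:ℝ≥0∞)⁻¹ • Measure.dirac (pt 0 0) := by
    rw [coef3]; simp only [add_smul]
  have h4 : (6:ℝ≥0∞)⁻¹ • Measure.dirac (pt 4 0) = (24:ℝ≥0∞)⁻¹ • Measure.dirac (pt 4 0)
      + (24:ℝ≥0∞)⁻¹ • Measure.dirac (pt 4 0) + (24:ℝ≥0∞)⁻¹ • Measure.dirac (pt 4 0)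
      + (24:ℝ≥0∞)⁻¹ • Measure.dirac (pt 4 0) := by
    rw [coef3]; simp only [add_smul]
  rw [h0, h4]
  abel

lemma piPrime_univ : piPrime Set.univ = 1 := by
  have h1 : piPrime Set.univ = (piPrime.map Prod.fst) Set.univ := by
    rw [Measure.map_apply measurable_fst MeasurableSet.univ, Set.preimage_univ]
  rw [h1, map_fst, muM3_eq]
  simp only [Measure.smul_apply, Measure.add_apply, Measure.dirac_apply_of_mem (Set.mem_univ _),
    smul_eq_mul]
  rw [← ENNReal.toReal_eq_toReal_iff' (by finiteness) (by finiteness)]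
  rw [ENNReal.toReal_mul]
  repeat rw [ENNReal.toReal_add (by finiteness) (by finiteness)]
  norm_num

lemma cost_piPrime : ∫ q, ‖q.1 - q.2‖ ∂piPrime = 1 / 2 := by
  rw [integral_piPrime (by fun_prop)]
  simp only [Fin.sum_univ_succ, Fin.sum_univ_zero, Pw, Cw, Matrix.cons_val_zero,
    Matrix.cons_val_succ]
  norm_num [Fin.val_succ, pt_sub, norm_pt, ENNReal.toReal_inv]

lemma mart_piPrime (φ : R2 →ᵇ ℝ) : ∫ p, φ p.1 • (p.2 - p.1) ∂piPrime = 0 := by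
  have hc : Continuous fun p : R2 × R2 => φ p.1 • (p.2 - p.1) :=
    (φ.continuous.comp continuous_fst).smul (continuous_snd.sub continuous_fst)
  rw [integral_piPrime hc]
  simp only [Fin.sum_univ_succ, Fin.sum_univ_zero, Pw, Cw, Matrix.cons_val_zero,
    Matrix.cons_val_succ]
  norm_num [Fin.val_succ, pt_sub, ENNReal.toReal_inv]
  ext i
  fin_cases i <;>
    simp [pt, pt_zero, PiLp.smul_apply, PiLp.add_apply, smul_eq_mul] <;> ring

lemma isMart_piPrime : IsMartCoupling (muM 3) ((muM 3).bind (Pker 0)) piPrime :=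
  ⟨⟨⟨piPrime_univ⟩, map_fst, map_snd⟩, mart_piPrime⟩

/-- `∫ ‖x − y‖ dπ' = 1/2`, hence `V^M_{c₁}(μ_3, μ_3 P_0) ≤ 1/2`. -/
theorem stmt11 :
    ∫ q, ‖q.1 - q.2‖ ∂piPrime = 1 / 2
    ∧ MOTval (fun x y => ‖x - y‖) (muM 3) ((muM 3).bind (Pker 0)) ≤ 1 / 2 := by
  refine ⟨cost_piPrime, ?_⟩
  apply csInf_le
  · refine ⟨0, ?_⟩
    rintro r ⟨π, _, rfl⟩
    exact integral_nonneg fun q => norm_nonneg _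
  · exact ⟨piPrime, isMart_piPrime, cost_piPrime⟩
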